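/- arXiv:1104.4135 — 2 statements merged into one kernel-verified Lean document; each statement's English description precedes it below -/
import Mathlib

section
/- Under assumptions (A1) and (A2), for every ε > 0 and all sufficiently large n, the type I error of the test Φ_n satisfies E_{β_n^0}(Φ_n) ≤ exp(−ε² n Λ_min² / (16σ²)), where the expectation is under y_n ~ N(X_n β_n^0, σ² I_n). -/
/-!
Write `z = y - Xβ⁰` for the noise and `H = X (XᵀX)⁻¹ Xᵀ` for the hat matrix. Since
`zᵀ H z = ‖X (β̂ - β⁰)‖² ≥ Λmin² n ‖β̂ - β⁰‖²`, the test rejects only if `zᵀ H z ≥ Λmin² n ε² / 4`.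
`H` is an orthogonal projection with `det (1 + H) = 2 ^ p`, and for any orthogonal projection `P`
the substitution `z = (1 + P) w` turns `exp (3 zᵀ P z / (8σ²))` times the `N(0, σ² I)` density at
`z` into that density at `w`; hence `E exp (3 zᵀ H z / (8σ²)) = 2 ^ p`. Markov's inequality bounds
the type I error by `2 ^ p exp (-3 ε² Λmin² n / (32σ²))`, and `p = o(n)` makes `2 ^ p` cost at most
a third of that exponent.
-/

open MeasureTheory ProbabilityTheory Filter

/-- Euclidean norm on `Fin k → ℝ`. -/
noncomputable def enorm' {k : ℕ} (v : Fin k → ℝ) : ℝ := Real.sqrt (∑ i, v i ^ 2)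

/-- The multivariate normal distribution `N(m, v I)` on `Fin k → ℝ`
(product of one-dimensional Gaussians with means `m i` and common variance `v`). -/
noncomputable def normalVec {k : ℕ} (m : Fin k → ℝ) (v : NNReal) : Measure (Fin k → ℝ) :=
  Measure.pi fun i => gaussianReal (m i) v

/-- Least squares estimator. -/
noncomputable def betaHat {n k : ℕ} (X : Matrix (Fin n) (Fin k) ℝ) (y : Fin n → ℝ) :
    Fin k → ℝ := (X.transpose * X)⁻¹.mulVec (X.transpose.mulVec y)

/-- Smallest singular value of `X`: infimum of `‖X v‖` over Euclidean-unit vectors `v`. -/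
noncomputable def sMin {n k : ℕ} (X : Matrix (Fin n) (Fin k) ℝ) : ℝ :=
  sInf ((fun v => enorm' (X.mulVec v)) '' {v | enorm' v = 1})

/-- Largest singular value of `X`: supremum of `‖X v‖` over Euclidean-unit vectors `v`. -/
noncomputable def sMax {n k : ℕ} (X : Matrix (Fin n) (Fin k) ℝ) : ℝ :=
  sSup ((fun v => enorm' (X.mulVec v)) '' {v | enorm' v = 1})

open Matrix
open scoped ENNReal

theorem lintegral_fin_nat_prod_eq_prod {n : ℕ} {E : Type*} [MeasurableSpace E]
    {μ : Fin n → Measure E} [∀ i, SigmaFinite (μ i)] {f : Fin n → E → ℝ≥0∞}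
    (hf : ∀ i, Measurable (f i)) :
    ∫⁻ x, ∏ i, f i (x i) ∂(Measure.pi μ) = ∏ i, ∫⁻ x, f i x ∂(μ i) := by
  induction n with
  | zero => simp
  | succ n ih =>
      calc
        _ = ∫⁻ x : E × (Fin n → E), f 0 x.1 * ∏ i : Fin n, f i.succ (x.2 i)
              ∂((μ 0).prod (Measure.pi fun i ↦ μ i.succ)) := by
          rw [← (measurePreserving_piFinSuccAbove μ 0).symm.lintegral_comp_emb
            (MeasurableEquiv.measurableEmbedding _)]
          simp [Fin.prod_univ_succ, MeasurableEquiv.piFinSuccAbove, Fin.insertNthEquiv]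
        _ = (∫⁻ x, f 0 x ∂μ 0) * ∏ i : Fin n, ∫⁻ x, f i.succ x ∂(μ i.succ) := by
          rw [← ih fun i ↦ hf i.succ]
          exact lintegral_prod_mul (hf 0).aemeasurable
            (Finset.measurable_prod _ fun (i : Fin n) _ ↦
              (hf i.succ).comp (measurable_pi_apply i)).aemeasurable
        _ = ∏ i, ∫⁻ x, f i x ∂(μ i) := by rw [Fin.prod_univ_succ]

theorem lintegral_eq_abs_det_mul_lintegral_comp {ι : Type*} [Fintype ι]
    {f : (ι → ℝ) →ₗ[ℝ] ι → ℝ} (hf : LinearMap.det f ≠ 0) {g : (ι → ℝ) → ℝ≥0∞}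
    (hg : Measurable g) :
    ∫⁻ x, g x = ENNReal.ofReal |LinearMap.det f| * ∫⁻ x, g (f x) := by
  rw [← lintegral_map hg (LinearMap.continuous_of_finiteDimensional f).measurable,
    Real.map_linearMap_volume_pi_eq_smul_volume_pi hf, lintegral_smul_measure, smul_eq_mul,
    ← mul_assoc, ← ENNReal.ofReal_mul (abs_nonneg _), abs_inv,
    mul_inv_cancel₀ (abs_ne_zero.mpr hf), ENNReal.ofReal_one, one_mul]

lemma normalVec_eq_withDensity {n : ℕ} (m : Fin n → ℝ) {v : NNReal} (hv : v ≠ 0) :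
    normalVec m v = volume.withDensity fun x ↦ ∏ i, gaussianPDF (m i) v (x i) := by
  refine Measure.pi_eq fun s hs ↦ ?_
  rw [withDensity_apply _ (.univ_pi hs), volume_pi, Measure.restrict_pi_pi,
    lintegral_fin_nat_prod_eq_prod fun i ↦ measurable_gaussianPDF _ _]
  simp_rw [gaussianReal_apply _ hv]

lemma normalVec_eq_map_add {n : ℕ} (m : Fin n → ℝ) (v : NNReal) :
    normalVec m v = (normalVec 0 v).map (· + m) := by
  have := Measure.pi_map_pi (μ := fun _ ↦ gaussianReal 0 v) (f := fun i x ↦ x + m i)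
    fun i ↦ (measurable_add_const _).aemeasurable
  simp only [gaussianReal_map_add_const, zero_add] at this
  exact this.symm

lemma prod_gaussianPDFReal_zero {n : ℕ} (v : NNReal) (x : Fin n → ℝ) :
    ∏ i, gaussianPDFReal 0 v (x i)
      = (Real.sqrt (2 * Real.pi * v))⁻¹ ^ n * Real.exp (-(x ⬝ᵥ x) / (2 * v)) := by
  simp only [gaussianPDFReal, sub_zero, Finset.prod_mul_distrib, Finset.prod_const,
    Finset.card_univ, Fintype.card_fin, ← Real.exp_sum, dotProduct, ← sq, Finset.sum_div,
    Finset.sum_neg_distrib, neg_div]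

section Projection

variable {n : ℕ} {P : Matrix (Fin n) (Fin n) ℝ}

lemma mulVec_dotProduct_mulVec_self (hPt : Pᵀ = P) (hPP : P * P = P) (w : Fin n → ℝ) :
    P *ᵥ w ⬝ᵥ P *ᵥ w = w ⬝ᵥ P *ᵥ w :=
  calc P *ᵥ w ⬝ᵥ P *ᵥ w = (P *ᵥ w) ᵥ* Pᵀ ⬝ᵥ w := by rw [hPt, dotProduct_mulVec]
    _ = w ⬝ᵥ P *ᵥ w := by rw [vecMul_transpose, mulVec_mulVec, hPP, dotProduct_comm]

lemma isUnit_det_one_add (hPP : P * P = P) : IsUnit (1 + P).det :=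
  isUnit_det_of_right_inverse (B := 1 - (1 / 2 : ℝ) • P) <| by
    simp only [add_mul, mul_sub, Matrix.mul_smul, hPP, one_mul, mul_one]
    module

lemma quadForm_one_add_mulVec (hPt : Pᵀ = P) (hPP : P * P = P) (w : Fin n → ℝ) :
    (1 + P) *ᵥ w ⬝ᵥ P *ᵥ ((1 + P) *ᵥ w) = 4 * (w ⬝ᵥ P *ᵥ w) := by
  have hPw : P *ᵥ (P *ᵥ w) = P *ᵥ w := by rw [mulVec_mulVec, hPP]
  rw [add_mulVec, one_mulVec, mulVec_add, hPw, add_dotProduct, dotProduct_add, dotProduct_add,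
    mulVec_dotProduct_mulVec_self hPt hPP]
  ring

lemma one_add_mulVec_dotProduct_self (hPt : Pᵀ = P) (hPP : P * P = P) (w : Fin n → ℝ) :
    (1 + P) *ᵥ w ⬝ᵥ (1 + P) *ᵥ w = w ⬝ᵥ w + 3 * (w ⬝ᵥ P *ᵥ w) := by
  rw [add_mulVec, one_mulVec, add_dotProduct, dotProduct_add, dotProduct_add,
    mulVec_dotProduct_mulVec_self hPt hPP, dotProduct_comm (P *ᵥ w) w]
  ring

lemma exp_quadForm_mul_prod_gaussianPDFReal (hPt : Pᵀ = P) (hPP : P * P = P) {v : NNReal}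
    (hv : v ≠ 0) (w : Fin n → ℝ) :
    Real.exp (3 / (8 * v) * ((1 + P) *ᵥ w ⬝ᵥ P *ᵥ ((1 + P) *ᵥ w)))
        * ∏ i, gaussianPDFReal 0 v (((1 + P) *ᵥ w) i)
      = ∏ i, gaussianPDFReal 0 v (w i) := by
  have hv' : (v : ℝ) ≠ 0 := by exact_mod_cast hv
  rw [prod_gaussianPDFReal_zero, prod_gaussianPDFReal_zero, quadForm_one_add_mulVec hPt hPP,
    one_add_mulVec_dotProduct_self hPt hPP, mul_left_comm, ← Real.exp_add]
  congr 2
  field_simp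
  ring

end Projection

instance {n : ℕ} (m : Fin n → ℝ) (v : NNReal) : IsProbabilityMeasure (normalVec m v) := by
  unfold normalVec; infer_instance

lemma lintegral_prod_gaussianPDFReal_zero {n : ℕ} {v : NNReal} (hv : v ≠ 0) :
    ∫⁻ w : Fin n → ℝ, ENNReal.ofReal (∏ i, gaussianPDFReal 0 v (w i)) = 1 := by
  have h := congrArg (· Set.univ) (normalVec_eq_withDensity (0 : Fin n → ℝ) hv)
  simp only [measure_univ, withDensity_apply _ MeasurableSet.univ, Measure.restrict_univ,
    Pi.zero_apply, gaussianPDF] at h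
  rw [h]
  exact lintegral_congr fun w ↦
    ENNReal.ofReal_prod_of_nonneg fun i _ ↦ gaussianPDFReal_nonneg _ _ _

lemma lintegral_exp_quadForm_normalVec_zero {n : ℕ} {P : Matrix (Fin n) (Fin n) ℝ}
    (hPt : Pᵀ = P) (hPP : P * P = P) {v : NNReal} (hv : v ≠ 0) :
    ∫⁻ z, ENNReal.ofReal (Real.exp (3 / (8 * v) * (z ⬝ᵥ P *ᵥ z))) ∂(normalVec 0 v)
      = ENNReal.ofReal |(1 + P).det| := by
  set G : (Fin n → ℝ) → ℝ :=
    fun z ↦ Real.exp (3 / (8 * v) * (z ⬝ᵥ P *ᵥ z)) * ∏ i, gaussianPDFReal 0 v (z i)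
  have hG : Measurable G := by fun_prop
  have hdet : LinearMap.det (toLin' (1 + P)) ≠ 0 := by
    rw [LinearMap.det_toLin']; exact (isUnit_det_one_add hPP).ne_zero
  calc ∫⁻ z, ENNReal.ofReal (Real.exp (3 / (8 * v) * (z ⬝ᵥ P *ᵥ z))) ∂(normalVec 0 v)
      = ∫⁻ z, ENNReal.ofReal (G z) := by
        rw [normalVec_eq_withDensity 0 hv, lintegral_withDensity_eq_lintegral_mul _ (by fun_prop)
          (by fun_prop)]
        refine lintegral_congr fun z ↦ ?_
        simp only [Pi.mul_apply, Pi.zero_apply, gaussianPDF, G]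
        rw [← ENNReal.ofReal_prod_of_nonneg fun i _ ↦ gaussianPDFReal_nonneg _ _ _,
          ← ENNReal.ofReal_mul (Finset.prod_nonneg fun i _ ↦ gaussianPDFReal_nonneg _ _ _),
          mul_comm]
    _ = ENNReal.ofReal |(1 + P).det| * ∫⁻ w, ENNReal.ofReal (G ((1 + P) *ᵥ w)) := by
        rw [lintegral_eq_abs_det_mul_lintegral_comp hdet hG.ennreal_ofReal, LinearMap.det_toLin']
        rfl
    _ = ENNReal.ofReal |(1 + P).det| := by
        simp only [G, exp_quadForm_mul_prod_gaussianPDFReal hPt hPP hv,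
          lintegral_prod_gaussianPDFReal_zero hv, mul_one]

lemma normalVec_zero_quadForm_ge_le {n : ℕ} {P : Matrix (Fin n) (Fin n) ℝ}
    (hPt : Pᵀ = P) (hPP : P * P = P) {v : NNReal} (hv : v ≠ 0) (r : ℝ) :
    normalVec 0 v {z | r ≤ z ⬝ᵥ P *ᵥ z}
      ≤ ENNReal.ofReal (|(1 + P).det| * Real.exp (-(3 / (8 * v) * r))) := by
  set t : ℝ := 3 / (8 * v)
  have hmarkov : ENNReal.ofReal (Real.exp (t * r)) * normalVec 0 v {z | r ≤ z ⬝ᵥ P *ᵥ z}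
      ≤ ENNReal.ofReal |(1 + P).det| := by
    rw [← lintegral_exp_quadForm_normalVec_zero hPt hPP hv]
    refine (mul_le_mul_right (measure_mono fun z hz ↦ ?_) _).trans
      (mul_meas_ge_le_lintegral₀ (by fun_prop) _)
    exact ENNReal.ofReal_le_ofReal (Real.exp_le_exp.mpr (by gcongr; exact hz))
  calc normalVec 0 v {z | r ≤ z ⬝ᵥ P *ᵥ z}
      = ENNReal.ofReal (Real.exp (-(t * r)))
          * (ENNReal.ofReal (Real.exp (t * r)) * normalVec 0 v {z | r ≤ z ⬝ᵥ P *ᵥ z}) := by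
        rw [← mul_assoc, ← ENNReal.ofReal_mul (Real.exp_pos _).le, ← Real.exp_add,
          neg_add_cancel, Real.exp_zero, ENNReal.ofReal_one, one_mul]
    _ ≤ ENNReal.ofReal (Real.exp (-(t * r))) * ENNReal.ofReal |(1 + P).det| := by gcongr
    _ = ENNReal.ofReal (|(1 + P).det| * Real.exp (-(t * r))) := by
        rw [← ENNReal.ofReal_mul (Real.exp_pos _).le, mul_comm]

section EuclideanNorm

variable {k : ℕ}

lemma enorm'_eq_norm (v : Fin k → ℝ) :
    enorm' v = ‖(WithLp.toLp 2 v : EuclideanSpace ℝ (Fin k))‖ := by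
  simp [enorm', EuclideanSpace.norm_eq]

lemma enorm'_nonneg (v : Fin k → ℝ) : 0 ≤ enorm' v := Real.sqrt_nonneg _

lemma enorm'_eq_zero {v : Fin k → ℝ} : enorm' v = 0 ↔ v = 0 := by
  simp [enorm'_eq_norm]

lemma enorm'_smul (a : ℝ) (v : Fin k → ℝ) : enorm' (a • v) = |a| * enorm' v := by
  simp [enorm'_eq_norm, norm_smul]

lemma dotProduct_self_eq_enorm'_sq (v : Fin k → ℝ) : v ⬝ᵥ v = enorm' v ^ 2 := by
  rw [enorm', Real.sq_sqrt (by positivity), dotProduct]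
  simp only [sq]

end EuclideanNorm

lemma sMin_mul_enorm'_le {n k : ℕ} (X : Matrix (Fin n) (Fin k) ℝ) (v : Fin k → ℝ) :
    sMin X * enorm' v ≤ enorm' (X *ᵥ v) := by
  rcases eq_or_ne v 0 with rfl | hv
  · simp [enorm'_eq_zero.mpr rfl]
  have hpos : 0 < enorm' v := (enorm'_nonneg v).lt_of_ne' (enorm'_eq_zero.not.mpr hv)
  have hunit : enorm' ((enorm' v)⁻¹ • v) = 1 := by
    rw [enorm'_smul, abs_inv, abs_of_pos hpos, inv_mul_cancel₀ hpos.ne']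
  have h : sMin X ≤ enorm' (X *ᵥ ((enorm' v)⁻¹ • v)) :=
    csInf_le ⟨0, by rintro _ ⟨u, -, rfl⟩; exact enorm'_nonneg _⟩ ⟨_, hunit, rfl⟩
  rwa [mulVec_smul, enorm'_smul, abs_inv, abs_of_pos hpos, inv_mul_eq_div, le_div_iff₀ hpos] at h

lemma injective_mulVec_of_mul_enorm'_le {n k : ℕ} {X : Matrix (Fin n) (Fin k) ℝ} {c : ℝ}
    (hc : 0 < c) (hX : ∀ u, c * enorm' u ≤ enorm' (X *ᵥ u)) : Function.Injective X.mulVec := by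
  intro u w huw
  have h := hX (u - w)
  rw [mulVec_sub, huw, sub_self, enorm'_eq_zero.mpr rfl] at h
  have : enorm' (u - w) = 0 :=
    le_antisymm (nonpos_of_mul_nonpos_right h hc) (enorm'_nonneg _)
  exact sub_eq_zero.mp (enorm'_eq_zero.mp this)

section LeastSquares

variable {n k : ℕ} {X : Matrix (Fin n) (Fin k) ℝ}

noncomputable def hatMatrix (X : Matrix (Fin n) (Fin k) ℝ) : Matrix (Fin n) (Fin n) ℝ :=
  X * (Xᵀ * X)⁻¹ * Xᵀ

lemma isUnit_det_transpose_mul_self (hX : Function.Injective X.mulVec) :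
    IsUnit (Xᵀ * X).det := by
  simpa [conjTranspose_eq_transpose_of_trivial] using
    (PosDef.conjTranspose_mul_self X hX).det_pos.ne'.isUnit

lemma hatMatrix_mulVec (y : Fin n → ℝ) : hatMatrix X *ᵥ y = X *ᵥ betaHat X y := by
  simp only [hatMatrix, betaHat, mulVec_mulVec, Matrix.mul_assoc]

lemma hatMatrix_transpose : (hatMatrix X)ᵀ = hatMatrix X := by
  rw [hatMatrix, transpose_mul, transpose_mul, transpose_transpose, transpose_nonsing_inv,
    transpose_mul, transpose_transpose, Matrix.mul_assoc]

lemma hatMatrix_mul_self (hX : Function.Injective X.mulVec) :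
    hatMatrix X * hatMatrix X = hatMatrix X := by
  simp only [hatMatrix, ← Matrix.mul_assoc]
  rw [Matrix.mul_assoc (X * (Xᵀ * X)⁻¹) Xᵀ X,
    nonsing_inv_mul_cancel_right _ _ (isUnit_det_transpose_mul_self hX)]

lemma det_one_add_hatMatrix (hX : Function.Injective X.mulVec) :
    (1 + hatMatrix X).det = 2 ^ k := by
  rw [hatMatrix, Matrix.mul_assoc, det_one_add_mul_comm, Matrix.mul_assoc,
    nonsing_inv_mul _ (isUnit_det_transpose_mul_self hX), ← two_smul ℝ, det_smul, det_one,
    Fintype.card_fin, mul_one]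

lemma betaHat_add_mulVec (hX : Function.Injective X.mulVec) (y : Fin n → ℝ) (β : Fin k → ℝ) :
    betaHat X (y + X *ᵥ β) = betaHat X y + β := by
  have hβ : (Xᵀ * X)⁻¹ *ᵥ (Xᵀ *ᵥ (X *ᵥ β)) = β := by
    rw [mulVec_mulVec, mulVec_mulVec, Matrix.mul_assoc,
      nonsing_inv_mul _ (isUnit_det_transpose_mul_self hX), one_mulVec]
  simp only [betaHat, mulVec_add, hβ]

lemma dotProduct_hatMatrix_mulVec (hX : Function.Injective X.mulVec) (y : Fin n → ℝ) :
    y ⬝ᵥ hatMatrix X *ᵥ y = enorm' (X *ᵥ betaHat X y) ^ 2 := by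
  have hnormal : (Xᵀ * X) *ᵥ betaHat X y = Xᵀ *ᵥ y := by
    rw [betaHat, mulVec_mulVec, mul_nonsing_inv _ (isUnit_det_transpose_mul_self hX), one_mulVec]
  calc y ⬝ᵥ hatMatrix X *ᵥ y = Xᵀ *ᵥ y ⬝ᵥ betaHat X y := by
        rw [hatMatrix_mulVec, dotProduct_mulVec, mulVec_transpose]
    _ = X *ᵥ betaHat X y ⬝ᵥ X *ᵥ betaHat X y := by
        rw [← hnormal, ← mulVec_mulVec, mulVec_transpose, ← dotProduct_mulVec]
    _ = enorm' (X *ᵥ betaHat X y) ^ 2 := dotProduct_self_eq_enorm'_sq _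

end LeastSquares

theorem normalVec_enorm'_betaHat_sub_gt_le {n k : ℕ} {X : Matrix (Fin n) (Fin k) ℝ} {c r : ℝ}
    (hc : 0 < c) (hX : ∀ u, c * enorm' u ≤ enorm' (X *ᵥ u)) (hr : 0 ≤ r) (β : Fin k → ℝ)
    {v : NNReal} (hv : v ≠ 0) :
    normalVec (X *ᵥ β) v {y | enorm' (betaHat X y - β) > r}
      ≤ ENNReal.ofReal (2 ^ k * Real.exp (-(3 / (8 * v) * (c ^ 2 * r ^ 2)))) := by
  have hinj := injective_mulVec_of_mul_enorm'_le hc hX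
  rw [normalVec_eq_map_add, ← MeasurableEquiv.coe_addRight, MeasurableEquiv.map_apply]
  calc normalVec 0 v (MeasurableEquiv.addRight (X *ᵥ β) ⁻¹' {y | enorm' (betaHat X y - β) > r})
      ≤ normalVec 0 v {z | c ^ 2 * r ^ 2 ≤ z ⬝ᵥ hatMatrix X *ᵥ z} := by
        refine measure_mono fun z hz ↦ ?_
        simp only [Set.mem_preimage, MeasurableEquiv.coe_addRight, Set.mem_ofPred_eq,
          betaHat_add_mulVec hinj, add_sub_cancel_right] at hz
        rw [Set.mem_ofPred_eq, dotProduct_hatMatrix_mulVec hinj, ← mul_pow]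
        exact pow_le_pow_left₀ (by positivity)
          ((mul_le_mul_of_nonneg_left hz.le hc.le).trans (hX _)) 2
    _ ≤ _ := by
        simpa [det_one_add_hatMatrix hinj] using
          normalVec_zero_quadForm_ge_le hatMatrix_transpose (hatMatrix_mul_self hinj) hv _

lemma eventually_mul_sqrt_le_sMin {p : ℕ → ℕ} {X : ∀ n : ℕ, Matrix (Fin n) (Fin (p n)) ℝ}
    {Λ : ℝ} (h : Λ < atTop.liminf fun n : ℕ ↦ sMin (X n) / Real.sqrt n) :
    ∀ᶠ n : ℕ in atTop, Λ * Real.sqrt n ≤ sMin (X n) := by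
  have hbdd : IsBoundedUnder (· ≥ ·) atTop fun n : ℕ ↦ sMin (X n) / Real.sqrt n :=
    isBoundedUnder_of ⟨0, fun n ↦ div_nonneg
      (Real.sInf_nonneg (by rintro _ ⟨u, -, rfl⟩; exact enorm'_nonneg _)) (Real.sqrt_nonneg _)⟩
  filter_upwards [eventually_lt_of_lt_liminf h hbdd, eventually_gt_atTop 0] with n hn hpos
  exact ((lt_div_iff₀ (by positivity)).mp hn).le

lemma two_pow_mul_exp_neg_le {p : ℕ} {a : ℝ} (h : p * Real.log 2 ≤ a) :
    (2 : ℝ) ^ p * Real.exp (-(3 * a)) ≤ Real.exp (-(2 * a)) := by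
  rw [← Real.rpow_natCast, Real.rpow_def_of_pos two_pos, ← Real.exp_add, Real.exp_le_exp]
  linarith

theorem stmt0_general
    (p : ℕ → ℕ) (X : ∀ n : ℕ, Matrix (Fin n) (Fin (p n)) ℝ)
    (β0 : ∀ n : ℕ, Fin (p n) → ℝ) (σ2 : NNReal) (hσ2 : 0 < (σ2 : ℝ))
    (Λmin : ℝ) (hΛmin : 0 < Λmin)
    -- (A1): pₙ = o(n)
    (hA1 : (fun n : ℕ => (p n : ℝ)) =o[atTop] fun n : ℕ => (n : ℝ))
    -- (A2): Λmin < liminf Λ_{n,min}/√n ≤ limsup Λ_{n,max}/√n < Λmax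
    (hA2₁ : Λmin < atTop.liminf fun n : ℕ => sMin (X n) / Real.sqrt n)
    (ε : ℝ) (hε : 0 < ε) :
    ∀ᶠ n in atTop,
      normalVec ((X n).mulVec (β0 n)) σ2
          {y | enorm' (betaHat (X n) y - β0 n) > ε / 2}
        ≤ ENNReal.ofReal (Real.exp (-(ε ^ 2 * n * Λmin ^ 2) / (16 * σ2))) := by
  set a : ℝ := ε ^ 2 * Λmin ^ 2 / (32 * σ2)
  have hp : ∀ᶠ n : ℕ in atTop, p n * Real.log 2 ≤ a * n := by
    filter_upwards [hA1.def (c := a / Real.log 2) (by positivity)] with n hn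
    rw [Real.norm_natCast, Real.norm_natCast] at hn
    calc p n * Real.log 2 ≤ a / Real.log 2 * n * Real.log 2 := by gcongr
      _ = a * n := by field_simp
  filter_upwards [eventually_mul_sqrt_le_sMin hA2₁, hp, eventually_gt_atTop 0] with n hsMin hpn hn
  have hc : 0 < Λmin * Real.sqrt n := by positivity
  refine (normalVec_enorm'_betaHat_sub_gt_le hc (fun u ↦ ?_) (by positivity) (β0 n)
    (by exact_mod_cast hσ2.ne')).trans (ENNReal.ofReal_le_ofReal ?_)
  · exact (mul_le_mul_of_nonneg_right hsMin (enorm'_nonneg u)).trans (sMin_mul_enorm'_le _ u)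
  have hσ2' : (σ2 : ℝ) ≠ 0 := hσ2.ne'
  convert two_pow_mul_exp_neg_le hpn using 3
  · rw [mul_pow, Real.sq_sqrt n.cast_nonneg]; simp only [a]; field_simp; ring
  · simp only [a]; field_simp; ring

/-- Under (A1) and (A2), for every `ε > 0` and all sufficiently large `n`, the type I error
of the test `Φₙ(y) = I(‖β̂ₙ - βₙ⁰‖ > ε/2)` satisfies
`E_{βₙ⁰}(Φₙ) ≤ exp(-ε² n Λmin² / (16 σ²))`, the expectation being under
`yₙ ~ N(Xₙ βₙ⁰, σ² Iₙ)`. -/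
theorem stmt0
    (p : ℕ → ℕ) (X : ∀ n : ℕ, Matrix (Fin n) (Fin (p n)) ℝ)
    (β0 : ∀ n : ℕ, Fin (p n) → ℝ) (σ2 : NNReal) (hσ2 : 0 < (σ2 : ℝ))
    (Λmin Λmax : ℝ) (hΛmin : 0 < Λmin)
    -- (A1): pₙ = o(n)
    (hA1 : (fun n : ℕ => (p n : ℝ)) =o[atTop] fun n : ℕ => (n : ℝ))
    -- (A2): Λmin < liminf Λ_{n,min}/√n ≤ limsup Λ_{n,max}/√n < Λmax
    (hA2₁ : Λmin < atTop.liminf fun n : ℕ => sMin (X n) / Real.sqrt n)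
    (hA2₂ : (atTop.liminf fun n : ℕ => sMin (X n) / Real.sqrt n)
              ≤ atTop.limsup fun n : ℕ => sMax (X n) / Real.sqrt n)
    (hA2₃ : (atTop.limsup fun n : ℕ => sMax (X n) / Real.sqrt n) < Λmax)
    (ε : ℝ) (hε : 0 < ε) :
    ∀ᶠ n in atTop,
      normalVec ((X n).mulVec (β0 n)) σ2
          {y | enorm' (betaHat (X n) y - β0 n) > ε / 2}
        ≤ ENNReal.ofReal (Real.exp (-(ε ^ 2 * n * Λmin ^ 2) / (16 * σ2))) :=
  stmt0_general p X β0 σ2 hσ2 Λmin hΛmin hA1 hA2₁ ε hε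
end

section
/- If χ²_p is a chi-squared random variable with p degrees of freedom and x ≥ 8p, then pr(χ²_p ≥ x) ≤ exp(−x/4). -/
/-! Chernoff's bound `P(X ≥ x) ≤ e^{-tx} E[e^{tX}]` at `t = 3/8`. Multiplying the Gamma(a, r)
density by `e^{ty}` gives `(r/(r-t))^a` times the Gamma(a, r - t) density, so for `χ²_p` the
moment generating function at `3/8` is `4^{p/2} = 2^p ≤ e^p ≤ e^{x/8}`, and
`e^{-3x/8} e^{x/8} = e^{-x/4}`. -/

open MeasureTheory ProbabilityTheory

/-- The chi-squared distribution with `p` degrees of freedom, i.e. the Gamma distribution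
with shape `p/2` and rate `1/2`. -/
noncomputable def chiSq (p : ℕ) : Measure ℝ := gammaMeasure ((p : ℝ) / 2) (1 / 2)

open Real Set

namespace ProbabilityTheory

theorem measure_Ici_le_exp_mul_lintegral_exp (μ : Measure ℝ) {t : ℝ} (ht : 0 ≤ t) (x : ℝ) :
    μ (Ici x) ≤ ENNReal.ofReal (exp (-(t * x))) * ∫⁻ y, ENNReal.ofReal (exp (t * y)) ∂μ :=
  calc μ (Ici x) = ∫⁻ _ in Ici x, 1 ∂μ := (setLIntegral_one _).symm
    _ ≤ ∫⁻ y in Ici x, ENNReal.ofReal (exp (-(t * x)) * exp (t * y)) ∂μ := by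
      refine setLIntegral_mono (by fun_prop) fun y (hy : x ≤ y) => ?_
      rw [← exp_add]
      exact ENNReal.one_le_ofReal.2 (one_le_exp (by nlinarith))
    _ ≤ ∫⁻ y, ENNReal.ofReal (exp (-(t * x)) * exp (t * y)) ∂μ := setLIntegral_le_lintegral _ _
    _ = ENNReal.ofReal (exp (-(t * x))) * ∫⁻ y, ENNReal.ofReal (exp (t * y)) ∂μ := by
      simp_rw [ENNReal.ofReal_mul (exp_nonneg _)]
      exact lintegral_const_mul _ (by fun_prop)

theorem gammaPDF_mul_ofReal_exp {a r t : ℝ} (hr : 0 ≤ r) (htr : t < r) (y : ℝ) :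
    gammaPDF a r y * ENNReal.ofReal (exp (t * y)) =
      ENNReal.ofReal ((r / (r - t)) ^ a) * gammaPDF a (r - t) y := by
  rcases lt_or_ge y 0 with hy | hy
  · rw [gammaPDF_of_neg hy, gammaPDF_of_neg hy, zero_mul, mul_zero]
  have hrt : 0 < r - t := sub_pos.2 htr
  rw [gammaPDF_of_nonneg hy, gammaPDF_of_nonneg hy, ← ENNReal.ofReal_mul' (exp_nonneg _),
    ← ENNReal.ofReal_mul (rpow_nonneg (div_nonneg hr hrt.le) _), div_rpow hr hrt.le]
  congr 1
  have hexp : exp (-(r * y)) * exp (t * y) = exp (-((r - t) * y)) := by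
    rw [← exp_add]; ring_nf
  rw [mul_assoc, hexp]
  field_simp

theorem lintegral_ofReal_exp_mul_gammaMeasure {a r t : ℝ} (ha : 0 < a) (hr : 0 ≤ r)
    (htr : t < r) :
    ∫⁻ y, ENNReal.ofReal (exp (t * y)) ∂gammaMeasure a r = ENNReal.ofReal ((r / (r - t)) ^ a) := by
  have hmeas (r' : ℝ) : Measurable (gammaPDF a r') := (measurable_gammaPDFReal a r').ennreal_ofReal
  rw [gammaMeasure, lintegral_withDensity_eq_lintegral_mul _ (hmeas r) (by fun_prop)]
  simp_rw [Pi.mul_apply, gammaPDF_mul_ofReal_exp hr htr]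
  rw [lintegral_const_mul _ (hmeas _),
    lintegral_gammaPDF_eq_one ha (sub_pos.2 htr), mul_one]

end ProbabilityTheory

theorem two_pow_le_exp (n : ℕ) : (2 : ℝ) ^ n ≤ exp n := by
  rw [← exp_one_pow]
  gcongr
  linarith [add_one_le_exp 1]

/-- If `χ²_p` is a chi-squared random variable with `p ≥ 1` degrees of freedom and
`x ≥ 8p`, then `pr(χ²_p ≥ x) ≤ exp(-x/4)`. -/
theorem stmt7 (p : ℕ) (hp : 1 ≤ p) (x : ℝ) (hx : 8 * p ≤ x) :
    chiSq p {y | y ≥ x} ≤ ENNReal.ofReal (Real.exp (-x / 4)) := by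
  have hchernoff := measure_Ici_le_exp_mul_lintegral_exp (chiSq p) (t := 3 / 8) (by norm_num) x
  rw [chiSq, lintegral_ofReal_exp_mul_gammaMeasure (by positivity) (by norm_num) (by norm_num),
    ← ENNReal.ofReal_mul (exp_nonneg _)] at hchernoff
  refine hchernoff.trans (ENNReal.ofReal_le_ofReal ?_)
  have hmgf : ((1 / 2 : ℝ) / (1 / 2 - 3 / 8)) ^ ((p : ℝ) / 2) = 2 ^ p := by
    rw [show (1 / 2 : ℝ) / (1 / 2 - 3 / 8) = 2 ^ (2 : ℝ) by norm_num, ← rpow_mul (by norm_num),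
      mul_div_cancel₀ _ two_ne_zero, rpow_natCast]
  calc exp (-(3 / 8 * x)) * ((1 / 2 : ℝ) / (1 / 2 - 3 / 8)) ^ ((p : ℝ) / 2)
      ≤ exp (-(3 / 8 * x)) * exp p := by rw [hmgf]; gcongr; exact two_pow_le_exp p
    _ ≤ exp (-x / 4) := by rw [← exp_add]; exact exp_le_exp.2 (by linarith)
end
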